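/- arXiv:math/9409226 — 6 statements merged into one kernel-verified Lean document; each statement's English description precedes it below -/
import Mathlib

section
/- Let c be a point in the plane and let s₁, ..., s₆ be six points such that the distance from c to each sᵢ is at most 2r. Then there exist distinct indices j, k such that the distance between s_j and s_k is at most 2r. -/
/-!
Seen from `c`, the six points have arguments on a circle. The six arcs between cyclically
consecutive arguments add up to `2π`, so one of them is at most `π/3`: two of the points make an
angle `θ ≤ π/3` at `c`. If their distances to `c` are `a, b ≤ 2r`, the law of cosines gives
`|s_j - s_k|² = a² + b² - 2ab cos θ ≤ a² + b² - ab ≤ max(a, b)² ≤ (2r)²`.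
-/

open Real
open scoped InnerProductSpace

theorem exists_mul_le_sub_of_pairwise_le_abs_sub {n : ℕ} {δ : ℝ} (t : Fin (n + 1) → ℝ)
    (h : Pairwise fun i j => δ ≤ |t i - t j|) : ∃ i j, n * δ ≤ t j - t i := by
  set σ := Tuple.sort t
  have hmono : Monotone (t ∘ σ) := Tuple.monotone_sort t
  have hspread : ∀ k : Fin (n + 1), (k : ℕ) * δ ≤ t (σ k) - t (σ 0) := by
    refine Fin.induction (by simp) fun k ih => ?_
    have hgap : δ ≤ t (σ k.succ) - t (σ k.castSucc) := by
      have hne : σ k.succ ≠ σ k.castSucc := σ.injective.ne (Fin.castSucc_lt_succ (i := k)).ne'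
      have hle : t (σ k.castSucc) ≤ t (σ k.succ) := hmono (Fin.castSucc_lt_succ (i := k)).le
      simpa [abs_of_nonneg (sub_nonneg.mpr hle)] using h hne
    rw [Fin.val_castSucc] at ih
    push_cast [Fin.val_succ]
    linarith
  exact ⟨σ 0, σ (Fin.last n), by simpa using hspread (Fin.last n)⟩

theorem exists_ne_cos_le_cos_sub {n : ℕ} (hn : n ≠ 0) (t : Fin (n + 1) → ℝ)
    (ht : ∀ i j, t i - t j < 2 * π) :
    ∃ i j, i ≠ j ∧ cos (2 * π / (n + 1)) ≤ cos (t i - t j) := by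
  set θ := 2 * π / (n + 1)
  have hθ : θ ≤ π := by
    rw [div_le_iff₀ (by positivity)]
    have : (1 : ℝ) ≤ n := by exact_mod_cast Nat.one_le_iff_ne_zero.mpr hn
    nlinarith [pi_pos]
  have hcos : ∀ d, |d| ≤ θ → cos θ ≤ cos d := fun d hd =>
    cos_abs d ▸ cos_le_cos_of_nonneg_of_le_pi (abs_nonneg d) hθ hd
  by_contra! hfar
  have hsep : Pairwise fun i j => θ ≤ |t i - t j| := fun i j hij =>
    (not_le.mp fun hle => (hfar i j hij).not_ge (hcos _ hle)).le
  obtain ⟨i, j, hij⟩ := exists_mul_le_sub_of_pairwise_le_abs_sub t hsep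
  -- going around the circle, the arc from `t j` back to `t i` is at most `θ`
  have harc : |2 * π - (t j - t i)| ≤ θ := by
    have : (n : ℝ) * θ = 2 * π - θ := by
      simp only [θ]; field_simp; ring
    rw [abs_of_pos (by linarith [ht j i])]
    linarith
  have hji : j ≠ i := by
    rintro rfl
    have : 0 < (n : ℝ) * θ := by positivity
    linarith
  exact (hfar j i hji).not_ge (cos_two_pi_sub (t j - t i) ▸ hcos _ harc)

theorem Complex.inner_eq_norm_mul_norm_mul_cos_arg_sub (z w : ℂ) :
    ⟪z, w⟫_ℝ = ‖z‖ * ‖w‖ * Real.cos (z.arg - w.arg) := by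
  rw [Complex.inner, mul_re, conj_re, conj_im, Real.cos_sub, ← norm_mul_cos_arg z,
    ← norm_mul_cos_arg w, ← norm_mul_sin_arg z, ← norm_mul_sin_arg w]
  ring

theorem Complex.exists_ne_norm_mul_norm_mul_cos_le_inner {n : ℕ} (hn : n ≠ 0)
    (z : Fin (n + 1) → ℂ) :
    ∃ i j, i ≠ j ∧ ‖z i‖ * ‖z j‖ * Real.cos (2 * π / (n + 1)) ≤ ⟪z i, z j⟫_ℝ := by
  have harg : ∀ i j, (z i).arg - (z j).arg < 2 * π := fun i j => by
    linarith [(z i).arg_mem_Ioc.2, (z j).arg_mem_Ioc.1]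
  obtain ⟨i, j, hij, hcos⟩ := exists_ne_cos_le_cos_sub hn (fun i => (z i).arg) harg
  refine ⟨i, j, hij, ?_⟩
  rw [Complex.inner_eq_norm_mul_norm_mul_cos_arg_sub]
  gcongr

theorem norm_sub_le_of_norm_mul_norm_le_two_mul_inner {E : Type*} [NormedAddCommGroup E]
    [InnerProductSpace ℝ E] {x y : E} {d : ℝ} (hx : ‖x‖ ≤ d) (hy : ‖y‖ ≤ d)
    (hxy : ‖x‖ * ‖y‖ ≤ 2 * ⟪x, y⟫_ℝ) : ‖x - y‖ ≤ d := by
  have hsq : ‖x - y‖ ^ 2 ≤ d ^ 2 := by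
    rw [norm_sub_sq_real]
    rcases le_total ‖x‖ ‖y‖ with hle | hle <;>
      nlinarith [norm_nonneg x, norm_nonneg y]
  exact abs_le_of_sq_le_sq' hsq ((norm_nonneg x).trans hx) |>.2

theorem six_points_pigeonhole_general (r : ℝ)
    (c : EuclideanSpace ℝ (Fin 2)) (s : Fin 6 → EuclideanSpace ℝ (Fin 2))
    (h : ∀ i, dist c (s i) ≤ 2 * r) :
    ∃ j k : Fin 6, j ≠ k ∧ dist (s j) (s k) ≤ 2 * r := by
  let e := Complex.orthonormalBasisOneI.repr.symm
  obtain ⟨j, k, hjk, hinner⟩ :=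
    Complex.exists_ne_norm_mul_norm_mul_cos_le_inner (n := 5) (by norm_num) (e <| s · - c)
  refine ⟨j, k, hjk, ?_⟩
  have hnorm : ∀ i, ‖s i - c‖ ≤ 2 * r := fun i => by rw [← dist_eq_norm, dist_comm]; exact h i
  rw [dist_eq_norm, ← sub_sub_sub_cancel_right (s j) (s k) c]
  refine norm_sub_le_of_norm_mul_norm_le_two_mul_inner (hnorm j) (hnorm k) ?_
  have hangle : 2 * π / ((5 : ℕ) + 1) = π / 3 := by norm_num; ring
  rw [hangle, cos_pi_div_three, e.norm_map, e.norm_map, e.inner_map_map] at hinner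
  linarith

/-- Among six points all within distance `2r` of a common point `c`, two of them
are within distance `2r` of each other. -/
theorem six_points_pigeonhole (r : ℝ) (hr : 0 < r)
    (c : EuclideanSpace ℝ (Fin 2)) (s : Fin 6 → EuclideanSpace ℝ (Fin 2))
    (h : ∀ i, dist c (s i) ≤ 2 * r) :
    ∃ j k : Fin 6, j ≠ k ∧ dist (s j) (s k) ≤ 2 * r :=
  six_points_pigeonhole_general r c s h
end

section
/- Let C be a disk of radius r in the plane and let S be a finite set of disks of radius r such that every disk in S intersects C and no two distinct disks in S intersect each other. Then |S| ≤ 5. (Two disks of radius r intersect iff the distance between their centers is at most 2r.) -/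
/-!
Place the centre `C` at the origin of `ℂ`. Two centres `p, q` lie within `2r` of the origin but
more than `2r` apart, so by the law of cosines the angle they subtend at the origin exceeds `π/3`.
Sorting the arguments of the centres, consecutive ones, and also the largest and smallest one
going around the circle, differ by more than `π/3`; six centres would need more than `2π`.
-/

open Real
open scoped InnerProductSpace

theorem norm_sub_le_of_norm_mul_norm_le_two_inner {F : Type*} [NormedAddCommGroup F]
    [InnerProductSpace ℝ F] {x y : F} {R : ℝ} (hx : ‖x‖ ≤ R) (hy : ‖y‖ ≤ R)
    (hxy : ‖x‖ * ‖y‖ ≤ 2 * ⟪x, y⟫_ℝ) : ‖x - y‖ ≤ R := by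
  have hR : 0 ≤ R := (norm_nonneg x).trans hx
  -- `‖x‖² + ‖y‖² - ‖x‖‖y‖ ≤ max ‖x‖ ‖y‖ ^ 2`
  have hsq : ‖x - y‖ ^ 2 ≤ R ^ 2 := by
    rw [norm_sub_sq_real]
    rcases le_total ‖x‖ ‖y‖ with h | h <;> nlinarith [norm_nonneg x, norm_nonneg y]
  exact (pow_le_pow_iff_left₀ (norm_nonneg _) hR two_ne_zero).1 hsq

theorem Real.pi_div_three_lt_and_lt_of_cos_lt_half {x : ℝ} (h0 : 0 ≤ x) (h2π : x ≤ 2 * π)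
    (hx : cos x < 1 / 2) : π / 3 < x ∧ x < 2 * π - π / 3 := by
  rw [← cos_pi_div_three] at hx
  constructor
  · by_contra! h
    exact hx.not_ge (cos_le_cos_of_nonneg_of_le_pi h0 (by linarith [pi_pos]) h)
  · by_contra! h
    rw [← cos_two_pi_sub] at hx
    exact hx.not_ge
      (cos_le_cos_of_nonneg_of_le_pi (by linarith) (by linarith [pi_pos]) (by linarith))

theorem Complex.pi_div_three_lt_and_lt_of_arg_le {z w : ℂ} {R : ℝ} (hz : ‖z‖ ≤ R)
    (hw : ‖w‖ ≤ R) (hzw : R < ‖w - z‖) (hle : z.arg ≤ w.arg) :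
    π / 3 < w.arg - z.arg ∧ w.arg - z.arg < 2 * π - π / 3 := by
  refine pi_div_three_lt_and_lt_of_cos_lt_half (by linarith) ?_ ?_
  · linarith [Complex.neg_pi_lt_arg z, Complex.arg_le_pi w]
  · by_contra! hcos
    refine hzw.not_ge (norm_sub_le_of_norm_mul_norm_le_two_inner hw hz ?_)
    rw [Complex.inner_eq_norm_mul_norm_mul_cos_arg_sub]
    nlinarith [mul_nonneg (norm_nonneg w) (norm_nonneg z)]

theorem Finset.exists_card_mul_le_sub_add {ι : Type*} [DecidableEq ι] (s : Finset ι)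
    (f : ι → ℝ) {δ : ℝ} (hgap : ∀ x ∈ s, ∀ y ∈ s, x ≠ y → f x ≤ f y → δ < f y - f x)
    (hs : s.Nonempty) : ∃ a ∈ s, ∃ b ∈ s, s.card * δ ≤ f b - f a + δ := by
  induction s using Finset.induction_on_max_value f with
  | empty => exact absurd hs Finset.not_nonempty_empty
  | insert c s hc hmax ih =>
    rcases s.eq_empty_or_nonempty with rfl | hs'
    · exact ⟨c, by simp, c, by simp, by simp⟩
    obtain ⟨a, ha, b, hb, hab⟩ :=
      ih (fun x hx y hy ↦ hgap x (mem_insert_of_mem hx) y (mem_insert_of_mem hy)) hs'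
    have hbc : δ < f c - f b := hgap b (mem_insert_of_mem hb) c (mem_insert_self c s)
      (by rintro rfl; exact hc hb) (hmax b hb)
    refine ⟨a, mem_insert_of_mem ha, c, mem_insert_self c s, ?_⟩
    rw [card_insert_of_notMem hc, Nat.cast_succ]
    linarith

/-- `f` lifts points of a circle of length `L` into one period; `hgap` says that their distances
along the circle exceed `δ`. -/
theorem Finset.card_mul_lt_of_circular_gap {ι : Type*} [DecidableEq ι] (s : Finset ι)
    (f : ι → ℝ) {δ L : ℝ} (hδ : 0 < δ)
    (hgap : ∀ x ∈ s, ∀ y ∈ s, x ≠ y → f x ≤ f y → δ < f y - f x ∧ f y - f x < L - δ)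
    (hs : 2 ≤ s.card) : s.card * δ < L := by
  obtain ⟨a, ha, b, hb, hab⟩ := s.exists_card_mul_le_sub_add f
    (fun x hx y hy hxy h ↦ (hgap x hx y hy hxy h).1) (card_pos.1 (by omega))
  have hcard : (2 : ℝ) ≤ s.card := by exact_mod_cast hs
  have hlt : f a < f b := by nlinarith
  have hne : a ≠ b := by rintro rfl; exact hlt.false
  linarith [(hgap a ha b hb hne hlt.le).2]

theorem packing_five_general (r : ℝ) (C : EuclideanSpace ℝ (Fin 2))
    (S : Finset (EuclideanSpace ℝ (Fin 2)))
    (hint : ∀ p ∈ S, dist p C ≤ 2 * r)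
    (hdisj : ∀ p ∈ S, ∀ q ∈ S, p ≠ q → ¬ dist p q ≤ 2 * r) :
    S.card ≤ 5 := by
  set z : EuclideanSpace ℝ (Fin 2) → ℂ := fun p ↦ Complex.orthonormalBasisOneI.repr.symm (p - C)
  have hnorm : ∀ p ∈ S, ‖z p‖ ≤ 2 * r := fun p hp ↦ by
    simpa only [z, LinearIsometryEquiv.norm_map, ← dist_eq_norm] using hint p hp
  have hdist : ∀ p ∈ S, ∀ q ∈ S, p ≠ q → 2 * r < ‖z q - z p‖ := fun p hp q hq hpq ↦ by
    simpa only [z, ← map_sub, sub_sub_sub_cancel_right, LinearIsometryEquiv.norm_map,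
      ← dist_eq_norm, not_le] using hdisj q hq p hp hpq.symm
  have hgap := fun p hp q hq hpq ↦
    Complex.pi_div_three_lt_and_lt_of_arg_le (hnorm p hp) (hnorm q hq) (hdist p hp q hq hpq)
  by_contra! hcard
  have hlt := S.card_mul_lt_of_circular_gap (fun p ↦ (z p).arg) (by positivity) hgap (by omega)
  have h6 : (6 : ℝ) ≤ S.card := by exact_mod_cast hcard
  nlinarith [pi_pos]

/-- If every disk of radius `r` (given by its center) in the finite set `S`
intersects the disk of radius `r` centered at `C`, and no two distinct disks of
`S` intersect each other, then `|S| ≤ 5`.  Two disks of radius `r` intersect iff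
their centers are at distance at most `2r`. -/
theorem packing_five (r : ℝ) (hr : 0 < r) (C : EuclideanSpace ℝ (Fin 2))
    (S : Finset (EuclideanSpace ℝ (Fin 2)))
    (hint : ∀ p ∈ S, dist p C ≤ 2 * r)
    (hdisj : ∀ p ∈ S, ∀ q ∈ S, p ≠ q → ¬ dist p q ≤ 2 * r) :
    S.card ≤ 5 :=
  packing_five_general r C S hint hdisj
end

section
/- Let P : V → ℝ² be a map assigning points in the plane to vertices, and define a graph G on V where u and v are adjacent iff u ≠ v and dist(P u, P v) ≤ 2. Then G contains no induced subgraph isomorphic to K_{1,6}; equivalently, for every vertex v, every independent set contained in the neighborhood of v has size at most 5. -/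
/-!
Centre the picture at `P v` and read the neighbours as complex numbers of modulus at most 2.
Among six or more arguments in `(-π, π]`, two differ by at most `π / 3` around the circle:
otherwise the extreme ones are at least `5π / 3` apart, hence within `π / 3` across `±π`.
Two points of modulus at most 2 at angle at most `π / 3` are at distance at most 2, so those
two neighbours are adjacent.
-/

/-- Unit disk graph in the proximity model: vertices are mapped to points in the
plane and two distinct vertices are adjacent iff their points are at distance ≤ 2. -/
def unitDiskGraph {V : Type*} (P : V → EuclideanSpace ℝ (Fin 2)) : SimpleGraph V where
  Adj u v := u ≠ v ∧ dist (P u) (P v) ≤ 2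
  symm := by
    constructor
    intro u v h
    exact ⟨h.1.symm, by rw [dist_comm]; exact h.2⟩
  loopless := by
    constructor
    intro v h
    exact h.1 rfl

open Real

theorem exists_card_sub_one_mul_le_sub {ι α : Type*} [CommRing α] [LinearOrder α]
    [IsStrictOrderedRing α] (f : ι → α) (d : α) (t : Finset ι) (ht : t.Nonempty)
    (hsep : (t : Set ι).Pairwise fun x y => d ≤ |f x - f y|) :
    ∃ x ∈ t, ∃ y ∈ t, ((t.card : α) - 1) * d ≤ f y - f x := by
  classical
  induction t using Finset.induction_on_max_value f with
  | empty => exact absurd ht Finset.not_nonempty_empty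
  | insert a s has hmax ih =>
    rcases s.eq_empty_or_nonempty with rfl | hs
    · exact ⟨a, by simp, a, by simp, by simp⟩
    obtain ⟨x, hx, y, hy, hxy⟩ := ih hs (hsep.mono (by simp))
    have hgap : d ≤ f a - f y := by
      have : d ≤ |f a - f y| := hsep (by simp) (by simp [hy]) (ne_of_mem_of_not_mem hy has).symm
      rwa [abs_of_nonneg (sub_nonneg.2 (hmax y hy))] at this
    refine ⟨x, by simp [hx], a, by simp, ?_⟩
    rw [Finset.card_insert_of_notMem has]
    push_cast
    linarith

theorem one_half_le_cos_of_abs_le {x : ℝ} (hx : |x| ≤ π / 3) : 1 / 2 ≤ cos x := by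
  rw [← cos_abs, ← cos_pi_div_three]
  exact cos_le_cos_of_nonneg_of_le_pi (abs_nonneg x) (by linarith [pi_pos]) hx

theorem exists_ne_one_half_le_cos_sub {ι : Type*} (θ : ι → ℝ) (t : Finset ι)
    (hθ : ∀ x ∈ t, θ x ∈ Set.Ioc (-π) π) (ht : 6 ≤ t.card) :
    ∃ x ∈ t, ∃ y ∈ t, x ≠ y ∧ 1 / 2 ≤ cos (θ x - θ y) := by
  by_contra! hfar
  have hsep : (t : Set ι).Pairwise fun x y => π / 3 ≤ |θ x - θ y| := by
    intro x hx y hy hxy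
    by_contra! hclose
    exact (hfar x hx y hy hxy).not_ge (one_half_le_cos_of_abs_le hclose.le)
  obtain ⟨x, hx, y, hy, hxy⟩ :=
    exists_card_sub_one_mul_le_sub θ (π / 3) t (Finset.card_pos.1 (by omega)) hsep
  have h6 : (6 : ℝ) ≤ t.card := by exact_mod_cast ht
  have hspread : 5 * (π / 3) ≤ θ y - θ x := by nlinarith [pi_pos]
  -- the extreme angles are close across `±π`
  have hwrap : |θ x - θ y + 2 * π| ≤ π / 3 := by
    rw [abs_le]
    constructor <;> linarith [(hθ x hx).1, (hθ y hy).2]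
  have hne : x ≠ y := by
    rintro rfl
    linarith [pi_pos]
  exact (hfar x hx y hy hne).not_ge
    (cos_add_two_pi (θ x - θ y) ▸ one_half_le_cos_of_abs_le hwrap)

theorem norm_sub_le_of_norm_mul_norm_le_two_mul_inner_s2 {E : Type*} [NormedAddCommGroup E]
    [InnerProductSpace ℝ E] {a b : E} {r : ℝ} (ha : ‖a‖ ≤ r) (hb : ‖b‖ ≤ r)
    (hab : ‖a‖ * ‖b‖ ≤ 2 * inner ℝ a b) : ‖a - b‖ ≤ r := by
  have hr : 0 ≤ r := (norm_nonneg a).trans ha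
  refine (pow_le_pow_iff_left₀ (norm_nonneg _) hr two_ne_zero).1 ?_
  rw [norm_sub_sq_real]
  nlinarith [norm_nonneg a, norm_nonneg b, mul_nonneg (sub_nonneg.2 ha) (sub_nonneg.2 hb)]

theorem Complex.inner_eq_norm_mul_norm_mul_cos_arg_sub_s2 (a b : ℂ) :
    inner ℝ a b = ‖a‖ * ‖b‖ * Real.cos (a.arg - b.arg) := by
  rw [Complex.inner, Real.cos_sub, Complex.mul_re, Complex.conj_re, Complex.conj_im,
    ← Complex.norm_mul_cos_arg a, ← Complex.norm_mul_sin_arg a,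
    ← Complex.norm_mul_cos_arg b, ← Complex.norm_mul_sin_arg b]
  ring

/-- A unit disk graph contains no induced `K_{1,6}`: for every vertex `v`, any
independent set contained in the neighborhood of `v` has size at most 5. -/
theorem unitDiskGraph_no_K16 {V : Type*} (P : V → EuclideanSpace ℝ (Fin 2))
    (v : V) (s : Finset V)
    (hnbr : ∀ x ∈ s, (unitDiskGraph P).Adj v x)
    (hind : (↑s : Set V).Pairwise fun a b => ¬ (unitDiskGraph P).Adj a b) :
    s.card ≤ 5 := by
  by_contra! hcard
  let c : V → ℂ := fun x => Complex.orthonormalBasisOneI.repr.symm (P x - P v)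
  have hdist : ∀ x y, ‖c x - c y‖ = dist (P x) (P y) := fun x y => by
    rw [← map_sub, LinearIsometryEquiv.norm_map, sub_sub_sub_cancel_right, dist_eq_norm]
  have hnorm : ∀ x ∈ s, ‖c x‖ ≤ 2 := fun x hx => by
    rw [LinearIsometryEquiv.norm_map, ← dist_eq_norm, dist_comm]
    exact (hnbr x hx).2
  obtain ⟨x, hx, y, hy, hxy, hcos⟩ := exists_ne_one_half_le_cos_sub (fun x => (c x).arg) s
    (fun x _ => ⟨Complex.neg_pi_lt_arg _, Complex.arg_le_pi _⟩) hcard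
  have hclose : ‖c x - c y‖ ≤ 2 :=
    norm_sub_le_of_norm_mul_norm_le_two_mul_inner_s2 (hnorm x hx) (hnorm y hy) (by
      rw [Complex.inner_eq_norm_mul_norm_mul_cos_arg_sub_s2]
      nlinarith [mul_nonneg (norm_nonneg (c x)) (norm_nonneg (c y))])
  exact hind hx hy hxy ⟨hxy, hdist x y ▸ hclose⟩
end

section
/- Let G be a finite unit disk graph (given by a proximity model P : V → ℝ², adjacency iff distance ≤ 2) with maximum degree Δ. Then G contains a clique of size at least ⌈Δ/6⌉ + 1. -/
open Real InnerProductGeometry Finset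

theorem norm_sub_le_of_angle_le_pi_div_three {E : Type*} [NormedAddCommGroup E]
    [InnerProductSpace ℝ E] {x y : E} {r : ℝ} (hx : ‖x‖ ≤ r) (hy : ‖y‖ ≤ r)
    (h : angle x y ≤ π / 3) : ‖x - y‖ ≤ r := by
  have hcos : 1 / 2 ≤ cos (angle x y) := by
    rw [← cos_pi_div_three]
    exact cos_le_cos_of_nonneg_of_le_pi (angle_nonneg x y) (by linarith [pi_pos]) h
  have hx0 := norm_nonneg x
  have hy0 := norm_nonneg y
  have hsq : ‖x - y‖ * ‖x - y‖ ≤ r * r := by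
    rw [norm_sub_sq_eq_norm_sq_add_norm_sq_sub_two_mul_norm_mul_norm_mul_cos_angle]
    rcases le_total ‖x‖ ‖y‖ with hxy | hxy <;> nlinarith [mul_nonneg hx0 hy0]
  exact mul_self_le_mul_self_iff (norm_nonneg _) (hx0.trans hx) |>.2 hsq

theorem Complex.norm_sub_le_of_abs_arg_sub_le {z w : ℂ} {r : ℝ} (hz : ‖z‖ ≤ r) (hw : ‖w‖ ≤ r)
    (h : |arg z - arg w| ≤ π / 3) : ‖z - w‖ ≤ r := by
  -- `angle` involving a zero vector is `π / 2`, so the degenerate cases are split off first.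
  rcases eq_or_ne z 0 with rfl | hz0
  · simpa using hw
  rcases eq_or_ne w 0 with rfl | hw0
  · simpa using hz
  have harg : arg (z / w) = arg z - arg w := by
    rw [← arg_coe_angle_toReal_eq_arg, arg_div_coe_angle hz0 hw0, ← Real.Angle.coe_sub,
      Real.Angle.toReal_coe_eq_self_iff_mem_Ioc]
    constructor <;> linarith [abs_le.1 h, pi_pos]
  refine norm_sub_le_of_angle_le_pi_div_three hz hw ?_
  rwa [angle_eq_abs_arg hz0 hw0, harg]

theorem mem_Ioc_of_natCeil_div_eq {a L t : ℝ} {j : ℕ} (hL : 0 < L) (hj : j ≠ 0)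
    (h : ⌈(t - a) / L⌉₊ = j) : t ∈ Set.Ioc (a + (j - 1) * L) (a + (j - 1) * L + L) := by
  rw [Nat.ceil_eq_iff hj, Nat.cast_pred (Nat.pos_of_ne_zero hj), lt_div_iff₀ hL,
    div_le_iff₀ hL] at h
  constructor <;> linarith [h.1, h.2]

theorem Finset.exists_card_le_mul_card_filter_Ioc {α : Type*} (s : Finset α) {f : α → ℝ}
    {a L : ℝ} {n : ℕ} (hL : 0 < L) (hf : ∀ x ∈ s, f x ∈ Set.Ioc a (a + n * L)) :
    ∃ c, #s ≤ n * #{x ∈ s | f x ∈ Set.Ioc c (c + L)} := by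
  rcases s.eq_empty_or_nonempty with rfl | ⟨x₀, hx₀⟩
  · exact ⟨a, by simp⟩
  set bucket : α → ℕ := fun x => ⌈(f x - a) / L⌉₊
  have hmaps : ∀ x ∈ s, bucket x ∈ Finset.Icc 1 n := fun x hx => by
    obtain ⟨hlo, hhi⟩ := hf x hx
    rw [mem_Icc, Nat.one_le_iff_ne_zero, ← pos_iff_ne_zero, Nat.ceil_pos, Nat.ceil_le,
      div_le_iff₀ hL]
    exact ⟨div_pos (by linarith) hL, by linarith⟩
  have hn : (n : ℝ) ≠ 0 := by
    have := mem_Icc.1 (hmaps x₀ hx₀)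
    exact_mod_cast (by omega : n ≠ 0)
  have hfibers : #(Finset.Icc 1 n) • ((#s : ℝ) / n) ≤ #s :=
    le_of_eq (by rw [Nat.card_Icc, Nat.add_sub_cancel, nsmul_eq_mul]; field_simp)
  obtain ⟨j, hj, hfiber⟩ :=
    exists_le_card_fiber_of_nsmul_le_card_of_maps_to hmaps ⟨_, hmaps x₀ hx₀⟩ hfibers
  have hj0 : j ≠ 0 := Nat.one_le_iff_ne_zero.1 (mem_Icc.1 hj).1
  set c : ℝ := a + (j - 1) * L
  have hsub : {x ∈ s | bucket x = j} ⊆ {x ∈ s | f x ∈ Set.Ioc c (c + L)} :=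
    fun x hx => by
      rw [mem_filter] at hx ⊢
      exact ⟨hx.1, mem_Ioc_of_natCeil_div_eq hL hj0 hx.2⟩
  refine ⟨c, ?_⟩
  have hcard : (#s : ℝ) ≤ n * #{x ∈ s | f x ∈ Set.Ioc c (c + L)} :=
    calc (#s : ℝ) = n * (#s / n) := by field_simp
      _ ≤ n * #{x ∈ s | bucket x = j} := by gcongr
      _ ≤ _ := by gcongr
  exact_mod_cast hcard

theorem isClique_unitDiskGraph_insert_of_arg_mem_Icc {V : Type*}
    (P : V → EuclideanSpace ℝ (Fin 2)) (e : EuclideanSpace ℝ (Fin 2) →ₗᵢ[ℝ] ℂ) {v : V}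
    {s : Set V} {c : ℝ}
    (hs : ∀ u ∈ s, (unitDiskGraph P).Adj v u ∧ (e (P u - P v)).arg ∈ Set.Icc c (c + π / 3)) :
    (unitDiskGraph P).IsClique (insert v s) := by
  refine SimpleGraph.isClique_insert.2 ⟨fun u hu w hw huw => ⟨huw, ?_⟩, fun u hu _ => (hs u hu).1⟩
  obtain ⟨⟨-, hu⟩, hu_arg⟩ := hs u hu
  obtain ⟨⟨-, hw⟩, hw_arg⟩ := hs w hw
  have hdist : dist (P u) (P w) = ‖e (P u - P v) - e (P w - P v)‖ := by
    rw [← map_sub, LinearIsometry.norm_map, sub_sub_sub_cancel_right, dist_eq_norm]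
  rw [hdist]
  refine Complex.norm_sub_le_of_abs_arg_sub_le ?_ ?_ ?_
  · rwa [LinearIsometry.norm_map, ← dist_eq_norm, dist_comm]
  · rwa [LinearIsometry.norm_map, ← dist_eq_norm, dist_comm]
  · rw [abs_le]
    constructor <;> linarith [hu_arg.1, hu_arg.2, hw_arg.1, hw_arg.2]

open scoped Classical in
/-- A finite unit disk graph with maximum degree `Δ` contains a clique of size
at least `⌈Δ/6⌉ + 1` (here `(Δ + 5) / 6 = ⌈Δ/6⌉` in natural number arithmetic). -/
theorem unitDiskGraph_clique_of_maxDegree {V : Type*} [Fintype V] [Nonempty V]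
    (P : V → EuclideanSpace ℝ (Fin 2)) :
    ∃ s : Finset V, (unitDiskGraph P).IsClique ↑s ∧
      ((unitDiskGraph P).maxDegree + 5) / 6 + 1 ≤ s.card := by
  set G := unitDiskGraph P
  obtain ⟨v, hv⟩ := G.exists_maximal_degree_vertex
  let e := Complex.orthonormalBasisOneI.repr.symm.toLinearIsometry
  have harg : ∀ u ∈ G.neighborFinset v,
      (e (P u - P v)).arg ∈ Set.Ioc (-π) (-π + (6 : ℕ) * (π / 3)) :=
    fun u _ => ⟨Complex.neg_pi_lt_arg _, by push_cast; linarith [Complex.arg_le_pi (e (P u - P v))]⟩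
  obtain ⟨c, hc⟩ := (G.neighborFinset v).exists_card_le_mul_card_filter_Ioc (by positivity) harg
  set S := {u ∈ G.neighborFinset v | (e (P u - P v)).arg ∈ Set.Ioc c (c + π / 3)}
  have hvS : v ∉ S := fun h => G.notMem_neighborFinset_self v (mem_filter.1 h).1
  refine ⟨insert v S, ?_, ?_⟩
  · rw [coe_insert]
    refine isClique_unitDiskGraph_insert_of_arg_mem_Icc P e (c := c) fun u hu => ?_
    obtain ⟨hadj, hu_arg⟩ := mem_filter.1 hu
    exact ⟨(G.mem_neighborFinset v u).1 hadj, Set.Ioc_subset_Icc_self hu_arg⟩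
  · rw [card_insert_of_notMem hvS, hv, ← G.card_neighborFinset_eq_degree]
    omega
end

section
/- Let G be a finite unit disk graph (proximity model in ℝ², threshold 2). Then for any maximal independent set D and any minimum dominating set D* of G, |D| ≤ 5·|D*|. -/
open Real InnerProductGeometry

theorem pi_div_three_lt_of_cos_lt_half {t : ℝ} (ht : 0 ≤ t) (hcos : cos t < 1 / 2) :
    π / 3 < t := by
  by_contra! h
  have := cos_le_cos_of_nonneg_of_le_pi ht (by linarith [pi_pos]) h
  rw [cos_pi_div_three] at this
  linarith

/-- Six points of `(-π, π]` cannot be pairwise more than `π / 3` apart on the circle: the six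
gaps between cyclically consecutive points would add up to more than `2π`. -/
theorem card_le_five_of_pairwise_cos_sub_lt_half {A : Finset ℝ} (hA : ↑A ⊆ Set.Ioc (-π) π)
    (hcos : (A : Set ℝ).Pairwise fun a b => cos (a - b) < 1 / 2) : A.card ≤ 5 := by
  by_contra! hcard
  obtain ⟨T, hTA, hT⟩ := Finset.exists_subset_card_eq (show 6 ≤ A.card from hcard)
  set b := T.orderEmbOfFin hT
  have hbA (i : Fin 6) : b i ∈ A := hTA (T.orderEmbOfFin_mem hT i)
  have gap (i j : Fin 6) (hij : i < j) : π / 3 < b j - b i := by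
    have hlt : b i < b j := b.strictMono hij
    exact pi_div_three_lt_of_cos_lt_half (by linarith) (hcos (hbA j) (hbA i) hlt.ne')
  have wrap : π / 3 < 2 * π + b 0 - b 5 := by
    refine pi_div_three_lt_of_cos_lt_half ?_ ?_
    · linarith [(hA (hbA 0)).1, (hA (hbA 5)).2]
    · rw [add_sub_assoc, add_comm, cos_add_two_pi]
      exact hcos (hbA 0) (hbA 5) (b.injective.ne (by decide))
  linarith [gap 0 1 (by decide), gap 1 2 (by decide), gap 2 3 (by decide),
    gap 3 4 (by decide), gap 4 5 (by decide)]

theorem cos_angle_lt_half_of_norm_le_of_lt_norm_sub {E : Type*} [NormedAddCommGroup E]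
    [InnerProductSpace ℝ E] {x y : E} {r : ℝ} (hx : ‖x‖ ≤ r) (hy : ‖y‖ ≤ r)
    (hxy : r < ‖x - y‖) : cos (angle x y) < 1 / 2 := by
  have hcos := norm_sub_sq_eq_norm_sq_add_norm_sq_sub_two_mul_norm_mul_norm_mul_cos_angle x y
  by_contra! h
  nlinarith [norm_nonneg x, norm_nonneg y, mul_nonneg (norm_nonneg x) (norm_nonneg y),
    mul_nonneg (sub_nonneg.2 hx) (sub_nonneg.2 hy)]

theorem Complex.cos_angle_eq_cos_arg_sub {z w : ℂ} (hz : z ≠ 0) (hw : w ≠ 0) :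
    Real.cos (angle z w) = Real.cos (z.arg - w.arg) := by
  rw [angle_eq_abs_arg hz hw, cos_abs, ← Real.Angle.cos_coe, arg_div_coe_angle hz hw,
    ← Real.Angle.coe_sub, Real.Angle.cos_coe]

theorem Complex.cos_arg_sub_lt_half_of_norm_le_of_lt_norm_sub {z w : ℂ} {r : ℝ} (hz : ‖z‖ ≤ r)
    (hw : ‖w‖ ≤ r) (hzw : r < ‖z - w‖) : Real.cos (z.arg - w.arg) < 1 / 2 := by
  have hz0 : z ≠ 0 := by rintro rfl; rw [zero_sub, norm_neg] at hzw; linarith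
  have hw0 : w ≠ 0 := by rintro rfl; rw [sub_zero] at hzw; linarith
  rw [← cos_angle_eq_cos_arg_sub hz0 hw0]
  exact cos_angle_lt_half_of_norm_le_of_lt_norm_sub hz hw hzw

theorem Complex.card_le_five_of_subset_closedBall {s : Finset ℂ} {c : ℂ} {r : ℝ}
    (hs : ↑s ⊆ Metric.closedBall c r) (hsep : (s : Set ℂ).Pairwise fun z w => r < dist z w) :
    s.card ≤ 5 := by
  classical
  have harg {z w : ℂ} (hz : z ∈ s) (hw : w ∈ s) (hzw : z ≠ w) :
      Real.cos ((z - c).arg - (w - c).arg) < 1 / 2 := by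
    refine cos_arg_sub_lt_half_of_norm_le_of_lt_norm_sub (r := r) ?_ ?_ ?_
    · simpa [dist_eq] using hs hz
    · simpa [dist_eq] using hs hw
    · simpa [dist_eq] using hsep hz hw hzw
  have hinj : Set.InjOn (fun z => (z - c).arg) s := by
    intro z hz w hw hzw
    by_contra hne
    have h := harg hz hw hne
    norm_num [show (z - c).arg = (w - c).arg from hzw] at h
  rw [← Finset.card_image_of_injOn hinj]
  refine card_le_five_of_pairwise_cos_sub_lt_half ?_ ?_
  · intro a ha
    obtain ⟨z, -, rfl⟩ := Finset.mem_image.1 ha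
    exact ⟨neg_pi_lt_arg _, arg_le_pi _⟩
  · rintro _ ha _ hb hab
    obtain ⟨z, hz, rfl⟩ := Finset.mem_image.1 ha
    obtain ⟨w, hw, rfl⟩ := Finset.mem_image.1 hb
    exact harg hz hw (fun h => hab (h ▸ rfl))

theorem EuclideanSpace.card_le_five_of_subset_closedBall {s : Finset (EuclideanSpace ℝ (Fin 2))}
    {c : EuclideanSpace ℝ (Fin 2)} {r : ℝ} (hs : ↑s ⊆ Metric.closedBall c r)
    (hsep : (s : Set (EuclideanSpace ℝ (Fin 2))).Pairwise fun x y => r < dist x y) :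
    s.card ≤ 5 := by
  let e := Complex.orthonormalBasisOneI.repr.symm.toIsometryEquiv
  rw [← Finset.card_image_of_injective s e.injective]
  refine Complex.card_le_five_of_subset_closedBall (c := e c) (r := r) ?_ ?_
  · rw [Finset.coe_image]
    rintro _ ⟨x, hx, rfl⟩
    simpa only [Metric.mem_closedBall, e.dist_eq] using hs hx
  · rw [Finset.coe_image]
    rintro _ ⟨x, hx, rfl⟩ _ ⟨y, hy, rfl⟩ hxy
    rw [e.dist_eq]
    exact hsep hx hy fun h => hxy (h ▸ rfl)

theorem SimpleGraph.card_le_mul_card_of_dominating {V : Type*} [DecidableEq V] (G : SimpleGraph V)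
    [DecidableRel G.Adj] {D S : Finset V} {k : ℕ} (hS : ∀ v ∉ S, ∃ u ∈ S, G.Adj u v)
    (hk : ∀ u ∈ S, {v ∈ D | v = u ∨ G.Adj u v}.card ≤ k) : D.card ≤ k * S.card := by
  have hcover : D ⊆ S.biUnion fun u => {v ∈ D | v = u ∨ G.Adj u v} := by
    intro v hv
    by_cases hvS : v ∈ S
    · exact Finset.mem_biUnion.2 ⟨v, hvS, Finset.mem_filter.2 ⟨hv, Or.inl rfl⟩⟩
    · obtain ⟨u, hu, huv⟩ := hS v hvS
      exact Finset.mem_biUnion.2 ⟨u, hu, Finset.mem_filter.2 ⟨hv, Or.inr huv⟩⟩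
  calc D.card ≤ _ := Finset.card_le_card hcover
    _ ≤ S.card * k := Finset.card_biUnion_le_card_mul _ _ _ hk
    _ = k * S.card := mul_comm _ _

theorem unitDiskGraph_card_closedNeighborhood_inter_indepSet_le_five {V : Type*} [DecidableEq V]
    (P : V → EuclideanSpace ℝ (Fin 2)) [DecidableRel (unitDiskGraph P).Adj] {D : Finset V}
    (hD : (unitDiskGraph P).IsIndepSet D) (u : V) :
    {v ∈ D | v = u ∨ (unitDiskGraph P).Adj u v}.card ≤ 5 := by
  set N := {v ∈ D | v = u ∨ (unitDiskGraph P).Adj u v}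
  have hsep : (N : Set V).Pairwise fun v w => 2 < dist (P v) (P w) := by
    intro v hv w hw hvw
    have hnadj := hD (Finset.mem_filter.1 hv).1 (Finset.mem_filter.1 hw).1 hvw
    by_contra! h
    exact hnadj ⟨hvw, h⟩
  have hinj : Set.InjOn P N := by
    intro v hv w hw hPvw
    by_contra hvw
    have h := hsep hv hw hvw
    norm_num [hPvw] at h
  rw [← Finset.card_image_of_injOn hinj]
  refine EuclideanSpace.card_le_five_of_subset_closedBall (c := P u) (r := 2) ?_ ?_
  · rw [Finset.coe_image]
    rintro _ ⟨v, hv, rfl⟩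
    rw [Metric.mem_closedBall, dist_comm]
    rcases (Finset.mem_filter.1 hv).2 with rfl | huv
    · simp
    · exact huv.2
  · rw [Finset.coe_image, hinj.pairwise_image]
    exact hsep

theorem unitDiskGraph_maximalIndep_le_five_mul_domination_general {V : Type*}
    (P : V → EuclideanSpace ℝ (Fin 2)) (D Dstar : Finset V)
    (hD_ind : (↑D : Set V).Pairwise fun a b => ¬ (unitDiskGraph P).Adj a b)
    (hdom : ∀ v : V, v ∉ Dstar → ∃ u ∈ Dstar, (unitDiskGraph P).Adj u v) :
    D.card ≤ 5 * Dstar.card := by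
  classical
  exact (unitDiskGraph P).card_le_mul_card_of_dominating hdom fun u _ =>
    unitDiskGraph_card_closedNeighborhood_inter_indepSet_le_five P hD_ind u

/-- In a finite unit disk graph, any maximal independent set `D` has size at
most 5 times the size of a minimum dominating set `D*`. -/
theorem unitDiskGraph_maximalIndep_le_five_mul_domination {V : Type*} [Fintype V]
    (P : V → EuclideanSpace ℝ (Fin 2)) (D Dstar : Finset V)
    (hD_ind : (↑D : Set V).Pairwise fun a b => ¬ (unitDiskGraph P).Adj a b)
    (hD_max : ∀ v : V, v ∉ D →
      ¬ (insert v (↑D : Set V)).Pairwise fun a b => ¬ (unitDiskGraph P).Adj a b)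
    (hdom : ∀ v : V, v ∉ Dstar → ∃ u ∈ Dstar, (unitDiskGraph P).Adj u v)
    (hmin : ∀ D' : Finset V,
      (∀ v : V, v ∉ D' → ∃ u ∈ D', (unitDiskGraph P).Adj u v) →
      Dstar.card ≤ D'.card) :
    D.card ≤ 5 * Dstar.card :=
  unitDiskGraph_maximalIndep_le_five_mul_domination_general P D Dstar hD_ind hdom
end

section
/- Let G be a point-intersection graph of circles of arbitrary radii: vertices correspond to pairs (cᵥ, rᵥ) ∈ ℝ² × ℝ_{>0}, with u ~ v iff u ≠ v and dist(c_u, c_v) ≤ r_u + r_v. Let v be a vertex with minimal radius rᵥ. Then every independent set contained in the neighborhood of v has size at most 5. -/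
/-- The intersection graph of circles of arbitrary radii: vertex `v` has center
`c v` and radius `r v`, and two distinct vertices are adjacent iff the distance
between their centers is at most the sum of their radii. -/
def circleIntersectionGraph {V : Type*} (c : V → EuclideanSpace ℝ (Fin 2))
    (r : V → ℝ) : SimpleGraph V where
  Adj u v := u ≠ v ∧ dist (c u) (c v) ≤ r u + r v
  symm := by
    constructor
    intro u v h
    exact ⟨h.1.symm, by rw [dist_comm, add_comm]; exact h.2⟩
  loopless := by
    constructor
    intro v h
    exact h.1 rfl

/-!
Put the center of `v` at the origin, so that every neighbour `x` of `v` has `‖c x‖ ≤ r v + r x`.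
If two neighbours `x`, `y` subtend an angle of at most `π / 3` at the origin, the law of cosines
gives `dist (c x) (c y) ≤ max ‖c x‖ ‖c y‖ ≤ r v + max (r x) (r y) ≤ r x + r y`, by minimality of
`r v`, so `x` and `y` are adjacent; so is a neighbour centered at the origin to any other.
Among six nonzero vectors of the plane two always subtend an angle of at most `π / 3`: seen from
one of them, the arguments of the other five avoid `[-π/3, π/3]`, and the rest of the circle is
covered by four half-open arcs of length `π / 3`.
-/

open InnerProductGeometry Real
open scoped RealInnerProductSpace

lemma norm_sub_le_max_of_norm_mul_norm_le_two_mul_inner {F : Type*} [NormedAddCommGroup F]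
    [InnerProductSpace ℝ F] {u w : F} (h : ‖u‖ * ‖w‖ ≤ 2 * ⟪u, w⟫) :
    ‖u - w‖ ≤ max ‖u‖ ‖w‖ := by
  have hsq : ‖u - w‖ ^ 2 ≤ ‖u‖ ^ 2 - ‖u‖ * ‖w‖ + ‖w‖ ^ 2 := by
    rw [norm_sub_sq_real]; linarith
  refine pow_le_pow_iff_left₀ (norm_nonneg _) (by positivity) two_ne_zero |>.mp (hsq.trans ?_)
  rcases le_total ‖u‖ ‖w‖ with hle | hle
  · rw [max_eq_right hle]; nlinarith [norm_nonneg u]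
  · rw [max_eq_left hle]; nlinarith [norm_nonneg w]

lemma abs_sub_lt_of_ceil_div_eq {a b c : ℝ} (hc : 0 < c) (h : ⌈a / c⌉ = ⌈b / c⌉) :
    |a - b| < c := by
  have := Int.abs_sub_lt_one_of_floor_eq_floor (a := -(a / c)) (b := -(b / c))
    (by rw [Int.floor_neg, Int.floor_neg, h])
  rwa [neg_sub_neg, ← sub_div, abs_div, abs_of_pos hc, div_lt_one hc, abs_sub_comm] at this

lemma ceil_mem_of_one_lt_abs {t : ℝ} (ht : t ∈ Set.Ioc (-3) 3) (h : 1 < |t|) :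
    ⌈t⌉ ∈ ({-2, -1, 2, 3} : Finset ℤ) := by
  have hle : t ≤ ⌈t⌉ := Int.le_ceil t
  have hlt : (⌈t⌉ : ℝ) < t + 1 := Int.ceil_lt_add_one t
  have : -3 < ⌈t⌉ := by exact_mod_cast ht.1.trans_le hle
  have : ⌈t⌉ < 4 := by exact_mod_cast hlt.trans_le (by linarith [ht.2] : t + 1 ≤ 4)
  rcases lt_abs.mp h with h | h
  · have : 1 < ⌈t⌉ := by exact_mod_cast h.trans_le hle
    simp only [Finset.mem_insert, Finset.mem_singleton]; omega
  · have : ⌈t⌉ < 0 := by exact_mod_cast hlt.trans (by linarith : t + 1 < 0)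
    simp only [Finset.mem_insert, Finset.mem_singleton]; omega

lemma norm_mul_norm_le_two_mul_inner_of_angle_le_pi_div_three {F : Type*}
    [NormedAddCommGroup F] [InnerProductSpace ℝ F] {u w : F} (h : angle u w ≤ π / 3) :
    ‖u‖ * ‖w‖ ≤ 2 * ⟪u, w⟫ := by
  have hcos : 1 / 2 ≤ cos (angle u w) := by
    rw [← cos_pi_div_three]
    exact cos_le_cos_of_nonneg_of_le_pi (angle_nonneg u w) (by linarith [pi_pos]) h
  rw [← cos_angle_mul_norm_mul_norm]
  nlinarith [mul_nonneg (norm_nonneg u) (norm_nonneg w)]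

namespace Complex

lemma angle_eq_abs_arg_sub_arg {x y : ℂ} (hx : x ≠ 0) (hy : y ≠ 0)
    (h : arg x - arg y ∈ Set.Ioc (-π) π) : angle x y = |arg x - arg y| := by
  rw [angle_eq_abs_arg hx hy, ← arg_coe_angle_toReal_eq_arg, arg_div_coe_angle hx hy,
    ← Real.Angle.coe_sub, Real.Angle.toReal_coe_eq_self_iff_mem_Ioc.mpr h]

lemma ceil_arg_div_pi_div_three_mem {z : ℂ} (h : π / 3 < |arg z|) :
    ⌈arg z / (π / 3)⌉ ∈ ({-2, -1, 2, 3} : Finset ℤ) := by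
  have hpi : 0 < π / 3 := by positivity
  refine ceil_mem_of_one_lt_abs ⟨?_, ?_⟩ ?_
  · rw [lt_div_iff₀ hpi]; linarith [neg_pi_lt_arg z]
  · rw [div_le_iff₀ hpi]; linarith [arg_le_pi z]
  · rwa [abs_div, abs_of_pos hpi, lt_div_iff₀ hpi, one_mul]

lemma exists_angle_le_pi_div_three {ι : Type*} {s : Finset ι} (hs : 5 < s.card) (f : ι → ℂ)
    (hf : ∀ i ∈ s, f i ≠ 0) : ∃ i ∈ s, ∃ j ∈ s, i ≠ j ∧ angle (f i) (f j) ≤ π / 3 := by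
  classical
  obtain ⟨i₀, hi₀⟩ := Finset.card_pos.mp (by omega : 0 < s.card)
  by_contra! hfar
  set φ : ι → ℝ := fun i ↦ arg (f i / f i₀)
  have hsep : ∀ i ∈ s, ∀ j ∈ s, i ≠ j → π / 3 < |φ i - φ j| := by
    intro i hi j hj hij
    by_contra! hnear
    have hIoc : φ i - φ j ∈ Set.Ioc (-π) π := by
      constructor <;> linarith [abs_le.mp hnear, pi_pos]
    have hangle := hfar i hi j hj hij
    rw [← angle_mul_right (inv_ne_zero (hf i₀ hi₀)), ← div_eq_mul_inv, ← div_eq_mul_inv,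
      angle_eq_abs_arg_sub_arg (div_ne_zero (hf i hi) (hf i₀ hi₀))
        (div_ne_zero (hf j hj) (hf i₀ hi₀)) hIoc] at hangle
    linarith
  have hsector : ∀ i ∈ s.erase i₀, ⌈φ i / (π / 3)⌉ ∈ ({-2, -1, 2, 3} : Finset ℤ) := by
    intro i hi
    have := hsep i (Finset.mem_of_mem_erase hi) i₀ hi₀ (Finset.ne_of_mem_erase hi)
    simp only [φ, div_self (hf i₀ hi₀), arg_one, sub_zero] at this
    exact ceil_arg_div_pi_div_three_mem this
  obtain ⟨i, hi, j, hj, hij, hsame⟩ := Finset.exists_ne_map_eq_of_card_lt_of_maps_to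
    (by rw [Finset.card_erase_of_mem hi₀, show ({-2, -1, 2, 3} : Finset ℤ).card = 4 from rfl]
        omega) hsector
  exact (hsep i (Finset.mem_of_mem_erase hi) j (Finset.mem_of_mem_erase hj) hij).not_gt
    (abs_sub_lt_of_ceil_div_eq (by positivity) hsame)

lemma exists_norm_mul_norm_le_two_mul_inner {ι : Type*} {s : Finset ι} (hs : 5 < s.card)
    (f : ι → ℂ) : ∃ i ∈ s, ∃ j ∈ s, i ≠ j ∧ ‖f i‖ * ‖f j‖ ≤ 2 * ⟪f i, f j⟫ := by
  by_cases hzero : ∃ i ∈ s, f i = 0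
  · obtain ⟨i, hi, hfi⟩ := hzero
    obtain ⟨j, hj, hji⟩ := s.exists_mem_ne (by omega) i
    exact ⟨i, hi, j, hj, hji.symm, by simp [hfi]⟩
  · push Not at hzero
    obtain ⟨i, hi, j, hj, hij, hangle⟩ := exists_angle_le_pi_div_three hs f hzero
    exact ⟨i, hi, j, hj, hij, norm_mul_norm_le_two_mul_inner_of_angle_le_pi_div_three hangle⟩

end Complex

lemma exists_norm_mul_norm_le_two_mul_inner_of_finrank_eq_two {F : Type*}
    [NormedAddCommGroup F] [InnerProductSpace ℝ F] (hF : Module.finrank ℝ F = 2) {ι : Type*}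
    {s : Finset ι} (hs : 5 < s.card) (f : ι → F) :
    ∃ i ∈ s, ∃ j ∈ s, i ≠ j ∧ ‖f i‖ * ‖f j‖ ≤ 2 * ⟪f i, f j⟫ := by
  have : FiniteDimensional ℝ F := Module.finite_of_finrank_eq_succ hF
  let e : ℂ ≃ₗᵢ[ℝ] F :=
    Complex.isometryOfOrthonormal ((stdOrthonormalBasis ℝ F).reindex (finCongr hF))
  obtain ⟨i, hi, j, hj, hij, h⟩ := Complex.exists_norm_mul_norm_le_two_mul_inner hs (e.symm ∘ f)
  refine ⟨i, hi, j, hj, hij, ?_⟩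
  simpa only [Function.comp_apply, LinearIsometryEquiv.norm_map,
    LinearIsometryEquiv.inner_map_map] using h

theorem circleIntersectionGraph_min_radius_indep_le_five_general {V : Type*}
    (c : V → EuclideanSpace ℝ (Fin 2)) (r : V → ℝ)
    (v : V) (hmin : ∀ u : V, r v ≤ r u) (s : Finset V)
    (hnbr : ∀ x ∈ s, (circleIntersectionGraph c r).Adj v x)
    (hind : (↑s : Set V).Pairwise fun a b => ¬ (circleIntersectionGraph c r).Adj a b) :
    s.card ≤ 5 := by
  by_contra! hs
  obtain ⟨x, hx, y, hy, hxy, hinner⟩ := exists_norm_mul_norm_le_two_mul_inner_of_finrank_eq_two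
    finrank_euclideanSpace_fin hs (fun w ↦ c w - c v)
  have hreach : ∀ w ∈ s, ‖c w - c v‖ ≤ r v + r w := fun w hw ↦ by
    rw [← dist_eq_norm, dist_comm]
    exact (hnbr w hw).2
  refine hind hx hy hxy ⟨hxy, ?_⟩
  calc dist (c x) (c y) = ‖(c x - c v) - (c y - c v)‖ := by
        rw [dist_eq_norm, sub_sub_sub_cancel_right]
    _ ≤ max ‖c x - c v‖ ‖c y - c v‖ := norm_sub_le_max_of_norm_mul_norm_le_two_mul_inner hinner
    _ ≤ r x + r y :=
        max_le (by linarith [hreach x hx, hmin y]) (by linarith [hreach y hy, hmin x])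

/-- In a circle intersection graph, if `v` is a vertex of minimal radius then
every independent set contained in the neighborhood of `v` has size at most 5. -/
theorem circleIntersectionGraph_min_radius_indep_le_five {V : Type*}
    (c : V → EuclideanSpace ℝ (Fin 2)) (r : V → ℝ) (hr : ∀ v : V, 0 < r v)
    (v : V) (hmin : ∀ u : V, r v ≤ r u) (s : Finset V)
    (hnbr : ∀ x ∈ s, (circleIntersectionGraph c r).Adj v x)
    (hind : (↑s : Set V).Pairwise fun a b => ¬ (circleIntersectionGraph c r).Adj a b) :
    s.card ≤ 5 :=
  circleIntersectionGraph_min_radius_indep_le_five_general c r v hmin s hnbr hind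
end
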